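/- Logarithmic interpolation for summable sequences: Let $(a_j)_{j\ge -1}$ be a sequence of nonnegative reals with $A := \sup_{j\ge -1} a_j$ finite and positive, and $B := \sum_{j\ge -1} 2^j a_j$ finite. Then $\sum_{j\ge -1} a_j \le C\, A \log\left(e + \frac{B}{A}\right)$ for an absolute constant $C$. -/
import Mathlib


/-- Logarithmic interpolation for summable sequences: if `a_j ≤ A` for all `j ≥ -1`
and `∑ 2^j a_j = B`, then `∑ a_j ≤ C A log(e + B/A)` for an absolute constant `C`. -/
theorem log_interpolation_sequences :
    ∃ C : ℝ, 0 < C ∧ ∀ (a : ℤ → ℝ) (A B : ℝ),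
      (∀ j, 0 ≤ a j) → (∀ j, j < -1 → a j = 0) →
      0 < A → (∀ j, a j ≤ A) →
      HasSum (fun j : ℤ => (2:ℝ) ^ j * a j) B →
      (∑' j : ℤ, a j) ≤ C * A * Real.log (Real.exp 1 + B / A) := by
  refine ⟨6, by norm_num, ?_⟩
  intro a A B ha0 haneg hA haA hB
  set b : ℤ → ℝ := fun j => (2:ℝ) ^ j * a j with hbdef
  have hb0 : ∀ j, 0 ≤ b j := fun j => mul_nonneg (zpow_nonneg (by norm_num) _) (ha0 j)
  have hBsum : Summable b := hB.summable
  have hBval : B = ∑' j, b j := hB.tsum_eq.symm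
  have hB0 : 0 ≤ B := hB.nonneg hb0
  have hle : ∀ j, a j ≤ 2 * b j := by
    intro j
    rcases lt_or_ge j (-1) with hj | hj
    · rw [haneg j hj]; have := hb0 j; linarith
    · have h2 : (2:ℝ)^(-1:ℤ) ≤ (2:ℝ)^j := zpow_le_zpow_right₀ (by norm_num) hj
      have h2' : (1:ℝ) ≤ 2 * (2:ℝ)^j := by
        rw [show ((2:ℝ)^(-1:ℤ)) = 1/2 by norm_num] at h2; linarith
      calc a j = 1 * a j := (one_mul _).symm
        _ ≤ (2 * (2:ℝ)^j) * a j := mul_le_mul_of_nonneg_right h2' (ha0 j)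
        _ = 2 * b j := by simp [hbdef]; ring
  have hasum : Summable a := Summable.of_nonneg_of_le ha0 hle (hBsum.mul_left 2)
  set r : ℝ := max 1 (B / A) with hrdef
  have hr1 : (1:ℝ) ≤ r := le_max_left _ _
  have hr0 : (0:ℝ) < r := lt_of_lt_of_le one_pos hr1
  set N : ℕ := ⌈Real.logb 2 r⌉₊ with hNdef
  have h2N : r ≤ (2:ℝ)^(N:ℕ) := by
    have h1 : Real.logb 2 r ≤ (N:ℝ) := Nat.le_ceil _
    calc r = (2:ℝ) ^ (Real.logb 2 r) := (Real.rpow_logb (by norm_num) (by norm_num) hr0).symm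
      _ ≤ (2:ℝ) ^ ((N:ℕ):ℝ) := by
          exact (Real.rpow_le_rpow_left_iff (by norm_num)).mpr h1
      _ = (2:ℝ)^(N:ℕ) := by rw [Real.rpow_natCast]
  set g : ℤ → ℝ := fun j => if j ≤ (N:ℤ) then a j else 0 with hgdef
  set h : ℤ → ℝ := fun j => if j ≤ (N:ℤ) then 0 else a j with hhdef
  have hgh : ∀ j, a j = g j + h j := by
    intro j; by_cases hj : j ≤ (N:ℤ) <;> simp [hgdef, hhdef, hj]
  have hg0 : ∀ j, 0 ≤ g j := by
    intro j; by_cases hj : j ≤ (N:ℤ) <;> simp [hgdef, hj, ha0 j]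
  have hh0 : ∀ j, 0 ≤ h j := by
    intro j; by_cases hj : j ≤ (N:ℤ) <;> simp [hhdef, hj, ha0 j]
  have hga : ∀ j, g j ≤ a j := by
    intro j; by_cases hj : j ≤ (N:ℤ) <;> simp [hgdef, hj, ha0 j]
  have hha : ∀ j, h j ≤ a j := by
    intro j; by_cases hj : j ≤ (N:ℤ) <;> simp [hhdef, hj, ha0 j]
  have hgsum : Summable g := Summable.of_nonneg_of_le hg0 hga hasum
  have hhsum : Summable h := Summable.of_nonneg_of_le hh0 hha hasum
  have hsplit : (∑' j, a j) = (∑' j, g j) + ∑' j, h j := by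
    rw [← Summable.tsum_add hgsum hhsum]; exact tsum_congr hgh
  -- bound the tsum of g
  have hgfin : (∑' j, g j) = ∑ j ∈ Finset.Icc (-1 : ℤ) (N:ℤ), g j := by
    apply tsum_eq_sum
    intro j hj
    simp only [Finset.mem_Icc, not_and_or, not_le] at hj
    rcases hj with hj | hj
    · by_cases hj' : j ≤ (N:ℤ) <;> simp [hgdef, hj', haneg j hj]
    · simp [hgdef, not_le.mpr hj]
  have hgbound : (∑' j, g j) ≤ ((N:ℝ) + 2) * A := by
    rw [hgfin]
    have hcard : (Finset.Icc (-1 : ℤ) (N:ℤ)).card = N + 2 := by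
      rw [Int.card_Icc]; omega
    calc ∑ j ∈ Finset.Icc (-1 : ℤ) (N:ℤ), g j
        ≤ (Finset.Icc (-1 : ℤ) (N:ℤ)).card • A := by
          apply Finset.sum_le_card_nsmul
          intro j _
          by_cases hj : j ≤ (N:ℤ)
          · simp [hgdef, hj, haA j]
          · simp [hgdef, hj]; exact hA.le
      _ = ((N:ℝ) + 2) * A := by rw [hcard]; norm_num
  -- bound the tsum of h
  set c : ℝ := (2:ℝ)^(-(N:ℤ)) with hcdef
  have hc0 : 0 < c := zpow_pos (by norm_num) _
  have hhpt : ∀ j, h j ≤ c * b j := by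
    intro j
    by_cases hj : j ≤ (N:ℤ)
    · simp only [hhdef, hj, if_true]
      exact mul_nonneg hc0.le (hb0 j)
    · simp only [hhdef, hj, if_false]
      push_neg at hj
      have hexp : (1:ℝ) ≤ (2:ℝ)^(j - (N:ℤ)) := one_le_zpow₀ (by norm_num) (by omega)
      calc a j = 1 * a j := (one_mul _).symm
        _ ≤ (2:ℝ)^(j - (N:ℤ)) * a j := mul_le_mul_of_nonneg_right hexp (ha0 j)
        _ = c * b j := by
            simp only [hcdef, hbdef]
            rw [zpow_sub₀ (by norm_num : (2:ℝ) ≠ 0)]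
            rw [zpow_neg]
            ring
  have hhbound : (∑' j, h j) ≤ A := by
    have h1 : (∑' j, h j) ≤ ∑' j, c * b j :=
      Summable.tsum_le_tsum hhpt hhsum (hBsum.mul_left c)
    have h2 : (∑' j, c * b j) = c * B := by rw [tsum_mul_left, ← hBval]
    have h3 : c * B ≤ A := by
      have hBA : B ≤ A * (2:ℝ)^(N:ℕ) := by
        have : B / A ≤ (2:ℝ)^(N:ℕ) := le_trans (le_max_right _ _) h2N
        calc B = A * (B / A) := by field_simp
          _ ≤ A * (2:ℝ)^(N:ℕ) := mul_le_mul_of_nonneg_left this hA.le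
      have hc : c = ((2:ℝ)^(N:ℕ))⁻¹ := by
        rw [hcdef, zpow_neg, zpow_natCast]
      rw [hc]
      rw [inv_mul_le_iff₀ (by positivity)]
      calc B ≤ A * (2:ℝ)^(N:ℕ) := hBA
        _ = (2:ℝ)^(N:ℕ) * A := by ring
    linarith
  -- combine
  set L : ℝ := Real.log (Real.exp 1 + B / A) with hLdef
  have hBA0 : 0 ≤ B / A := div_nonneg hB0 hA.le
  have hL1 : 1 ≤ L := by
    rw [hLdef]
    calc (1:ℝ) = Real.log (Real.exp 1) := (Real.log_exp 1).symm
      _ ≤ Real.log (Real.exp 1 + B / A) :=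
          Real.log_le_log (Real.exp_pos 1) (by linarith)
  have hlogr : Real.logb 2 r ≤ L / Real.log 2 := by
    rw [Real.logb, div_le_div_iff_of_pos_right (Real.log_pos (by norm_num))]
    apply Real.log_le_log hr0
    rcases max_cases (1:ℝ) (B/A) with ⟨heq, _⟩ | ⟨heq, _⟩ <;> rw [hrdef, heq]
    · have := Real.add_one_le_exp 1; linarith
    · have := Real.exp_pos 1; linarith
  have hN : (N:ℝ) < Real.logb 2 r + 1 :=
    Nat.ceil_lt_add_one (Real.logb_nonneg (by norm_num) hr1)
  have hlog2 : (0.6931471803:ℝ) < Real.log 2 := Real.log_two_gt_d9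
  have hNL : (N:ℝ) + 3 ≤ 6 * L := by
    have h1 : (N:ℝ) < L / Real.log 2 + 1 := lt_of_lt_of_le hN (by linarith)
    have h2 : L / Real.log 2 ≤ 2 * L := by
      rw [div_le_iff₀ (by linarith)]
      nlinarith
    nlinarith
  calc (∑' j, a j) = (∑' j, g j) + ∑' j, h j := hsplit
    _ ≤ ((N:ℝ) + 2) * A + A := add_le_add hgbound hhbound
    _ = ((N:ℝ) + 3) * A := by ring
    _ ≤ (6 * L) * A := mul_le_mul_of_nonneg_right hNL hA.le
    _ = 6 * A * L := by ring
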